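/- arXiv:2508.16177 — 9 statements merged into one kernel-verified Lean document; each statement's English description precedes it below -/
import Mathlib

section
/- Let R be a ranking profile on m candidates (a function from rankings to [0,1] with weights summing to 1). If a ranking ⊳ is rank-priceable for R, then ⊳ satisfies unanimous proportional justified representation: for every ranking ≻, u(≻,⊳) ≥ ⌊R(≻) · C(m,2)⌋. -/
/-- A ranking on `Fin m` is modelled as a permutation `σ`, where candidate `x` is
preferred to `y` iff `σ x < σ y`. Utility of a ranking `σ` for the output ranking
`⊳ = x₁,…,x_m` (the natural order on `Fin m`): number of pairs on which they agree. -/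
def uOut {m : ℕ} (σ : Equiv.Perm (Fin m)) : ℕ :=
  ((Finset.univ : Finset (Fin m × Fin m)).filter
    (fun p => σ p.1 < σ p.2 ∧ p.1 < p.2)).card

/-- `u(≻, x_i, {x_i,…,x_m})`: the number of candidates from position `i` onwards
that the ranking `σ` places below `x_i`. -/
def uSuffix {m : ℕ} (σ : Equiv.Perm (Fin m)) (i : Fin m) : ℕ :=
  ((Finset.univ : Finset (Fin m)).filter (fun j => i < j ∧ σ i < σ j)).card

lemma sum_uSuffix {m : ℕ} (σ : Equiv.Perm (Fin m)) :
    ∑ i, uSuffix σ i = uOut σ := by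
  unfold uOut uSuffix
  rw [Finset.card_filter, ← Finset.univ_product_univ, Finset.sum_product]
  simp only [Finset.card_filter]
  congr 1
  ext i
  congr 1
  ext j
  simp [and_comm]

/-- Rank-priceability implies unanimous proportional justified representation:
if the output ranking `x₁,…,x_m` (the natural order on `Fin m`) admits a payment
scheme `π` satisfying conditions (1)–(4), then every input ranking `σ` gets
utility at least `⌊R(σ)·C(m,2)⌋`. -/
theorem stmt_4 {m : ℕ} (R : Equiv.Perm (Fin m) → ℝ)
    (hR0 : ∀ σ, 0 ≤ R σ) (hR1 : ∀ σ, R σ ≤ 1) (hRsum : ∑ σ, R σ = 1)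
    (π : Equiv.Perm (Fin m) → Fin m → ℝ)
    (h1 : ∀ σ i, 0 ≤ π σ i ∧ π σ i ≤ (uSuffix σ i : ℝ))
    (h2 : ∀ σ, ∑ i, π σ i ≤ (m.choose 2 : ℝ) * R σ)
    (h3 : ∀ i : Fin m, ∑ σ, π σ i ≤ (m : ℝ) - 1 - (i : ℕ))
    (h4 : (m.choose 2 : ℝ) - 1 < ∑ σ, ∑ i, π σ i) :
    ∀ σ : Equiv.Perm (Fin m), ⌊R σ * (m.choose 2 : ℝ)⌋ ≤ (uOut σ : ℤ) := by
  intro σ₀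
  by_contra hc
  push_neg at hc
  have hkey : (uOut σ₀ : ℝ) + 1 ≤ R σ₀ * (m.choose 2 : ℝ) := by
    have : ((uOut σ₀ : ℤ) + 1 : ℤ) ≤ ⌊R σ₀ * (m.choose 2 : ℝ)⌋ := hc
    have := Int.le_floor.mp this
    push_cast at this
    linarith
  -- σ₀'s spending is at most uOut σ₀
  have hA : ∑ i, π σ₀ i ≤ (uOut σ₀ : ℝ) := by
    calc ∑ i, π σ₀ i ≤ ∑ i, (uSuffix σ₀ i : ℝ) :=
          Finset.sum_le_sum fun i _ => (h1 σ₀ i).2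
      _ = (uOut σ₀ : ℝ) := by
          rw [← Nat.cast_sum, sum_uSuffix]
  -- others' spending
  have hB : ∑ σ ∈ Finset.univ.erase σ₀, ∑ i, π σ i
      ≤ (m.choose 2 : ℝ) * (1 - R σ₀) := by
    calc ∑ σ ∈ Finset.univ.erase σ₀, ∑ i, π σ i
        ≤ ∑ σ ∈ Finset.univ.erase σ₀, (m.choose 2 : ℝ) * R σ :=
          Finset.sum_le_sum fun σ _ => h2 σ
      _ = (m.choose 2 : ℝ) * ∑ σ ∈ Finset.univ.erase σ₀, R σ := by
          rw [Finset.mul_sum]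
      _ = (m.choose 2 : ℝ) * (1 - R σ₀) := by
          have := Finset.add_sum_erase Finset.univ R (Finset.mem_univ σ₀)
          rw [hRsum] at this
          rw [show ∑ σ ∈ Finset.univ.erase σ₀, R σ = 1 - R σ₀ by linarith]
  have hsplit : ∑ σ, ∑ i, π σ i
      = ∑ i, π σ₀ i + ∑ σ ∈ Finset.univ.erase σ₀, ∑ i, π σ i :=
    (Finset.add_sum_erase Finset.univ (fun σ => ∑ i, π σ i)
      (Finset.mem_univ σ₀)).symm
  nlinarith [h4, hA, hB, hkey, hsplit]
end

section
/- Let ⊳* be a ranking that minimizes the weight R(⊲) assigned to its inverse ⊲ over all rankings ⊳. Then ⊳* satisfies unanimous justified representation: every ranking ≻ with R(≻) ≥ 1/C(m,2) has u(≻,⊳*) ≥ 1. (This holds because the minimizing inverse has weight at most 1/m! < 1/C(m,2) for m ≥ 3.) -/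
/-- Rankings on `Fin m` are modelled as permutations: `x ≻ y` iff `σ x < σ y`.
`uP σ τ` counts the pairs on which the rankings `σ` and `τ` agree. -/
def uP {m : ℕ} (σ τ : Equiv.Perm (Fin m)) : ℕ :=
  ((Finset.univ : Finset (Fin m × Fin m)).filter
    (fun p => σ p.1 < σ p.2 ∧ τ p.1 < τ p.2)).card

/-- The inverse (reversal) of a ranking `σ`: `x` is preferred to `y` iff `σ y < σ x`. -/
def invRank {m : ℕ} (σ : Equiv.Perm (Fin m)) : Equiv.Perm (Fin m) :=
  σ.trans Fin.revPerm

lemma invRank_invRank {m : ℕ} (σ : Equiv.Perm (Fin m)) : invRank (invRank σ) = σ := by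
  ext x; simp [invRank]

lemma eq_invRank_of_uP_eq_zero {m : ℕ} {σ τ : Equiv.Perm (Fin m)} (h : uP σ τ = 0) :
    τ = invRank σ := by
  have hz : ∀ x y : Fin m, σ x < σ y → ¬ τ x < τ y := by
    intro x y hxy hτ
    have : ((Finset.univ : Finset (Fin m × Fin m)).filter
        (fun p => σ p.1 < σ p.2 ∧ τ p.1 < τ p.2)).card ≠ 0 := by
      apply Finset.card_ne_zero_of_mem (a := (x, y))
      simp [hxy, hτ]
    exact this h
  set f : Fin m → Fin m := fun x => Fin.rev (τ (σ.symm x)) with hf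
  have hmono : StrictMono f := by
    intro a b hab
    have hσ : σ (σ.symm a) < σ (σ.symm b) := by simpa using hab
    have h1 : ¬ τ (σ.symm a) < τ (σ.symm b) := hz _ _ hσ
    have hne : τ (σ.symm a) ≠ τ (σ.symm b) := by
      simp only [ne_eq, EmbeddingLike.apply_eq_iff_eq]
      intro hc
      exact absurd (congrArg σ hc) (by simpa using hab.ne)
    have : τ (σ.symm b) < τ (σ.symm a) := lt_of_le_of_ne (not_lt.mp h1) (Ne.symm hne)
    simpa [hf, Fin.rev_lt_rev] using this
  have hrange : Set.range f = Set.range (id : Fin m → Fin m) := by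
    rw [Set.range_id]
    exact Set.range_eq_univ.mpr
      (Fin.rev_surjective.comp (τ.surjective.comp σ.symm.surjective))
  have instW : WellFoundedLT (Fin m) := inferInstance
  have hid : f = id :=
    (@StrictMono.range_inj (Fin m) (Fin m) _ _ instW f id hmono strictMono_id).1 hrange
  ext y
  have h1 := congrFun hid (σ y)
  simp only [hf, Equiv.symm_apply_apply, id] at h1
  have h2 : τ y = Fin.rev (σ y) := by
    have := congrArg Fin.rev h1
    simpa using this
  simp only [invRank, Equiv.trans_apply, Fin.revPerm_apply]
  exact congrArg Fin.val h2

/-- The Chamberlin–Courant-style ranking: if `⊳*` minimizes the weight of its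
inverse over all rankings, it satisfies unanimous justified representation:
every ranking `σ` with `R(σ) ≥ 1/C(m,2)` has `u(σ,⊳*) ≥ 1`. -/
theorem stmt_5 {m : ℕ} (hm : 3 ≤ m) (R : Equiv.Perm (Fin m) → ℝ)
    (hR0 : ∀ σ, 0 ≤ R σ) (hR1 : ∀ σ, R σ ≤ 1) (hRsum : ∑ σ, R σ = 1)
    (σstar : Equiv.Perm (Fin m))
    (hmin : ∀ τ : Equiv.Perm (Fin m), R (invRank σstar) ≤ R (invRank τ)) :
    ∀ σ : Equiv.Perm (Fin m), (1 : ℝ) / (m.choose 2) ≤ R σ → 1 ≤ uP σ σstar := by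
  intro σ hσ
  by_contra hcon
  have h0 : uP σ σstar = 0 := by omega
  have hstar : σstar = invRank σ := eq_invRank_of_uP_eq_zero h0
  have hσeq : invRank σstar = σ := by rw [hstar, invRank_invRank]
  have hcard : (Finset.univ : Finset (Equiv.Perm (Fin m))).card = m.factorial := by
    simp [Fintype.card_perm]
  have hbij : ∑ τ, R (invRank τ) = 1 := by
    rw [← hRsum]
    exact Fintype.sum_equiv (Function.Involutive.toPerm invRank invRank_invRank)
      (fun τ => R (invRank τ)) R (fun τ => rfl)
  have hfac : (m.factorial : ℝ) * R σ ≤ 1 := by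
    have h := Finset.card_nsmul_le_sum (Finset.univ : Finset (Equiv.Perm (Fin m)))
      (fun τ => R (invRank τ)) (R (invRank σstar)) (fun τ _ => hmin τ)
    rw [hcard, hbij] at h
    rw [← hσeq]
    simpa [nsmul_eq_mul] using h
  have hch : m.choose 2 < m.factorial := by
    have h2 : m.choose 2 = m * (m - 1) / 2 := Nat.choose_two_right m
    have hle : m * (m-1) ≤ m.factorial := by
      calc m * (m - 1) ≤ m * (m-1) * (m-2).factorial :=
            Nat.le_mul_of_pos_right _ (Nat.factorial_pos _)
        _ = m.factorial := by
            have h1 : m - 1 + 1 = m := by omega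
            have h2' : m - 2 + 1 = m - 1 := by omega
            calc m * (m-1) * (m-2).factorial = m * ((m-1) * (m-2).factorial) := by ring
              _ = m * (m-1).factorial := by rw [← h2', Nat.factorial_succ, h2']
              _ = m.factorial := by rw [← h1, Nat.factorial_succ, h1]
    have h6 : 3 * 2 ≤ m * (m - 1) := Nat.mul_le_mul hm (by omega)
    omega
  have hchpos : 0 < m.choose 2 := Nat.choose_pos (by omega)
  have h1 : (m.factorial : ℝ) / m.choose 2 ≤ m.factorial * R σ := by
    rw [div_eq_mul_inv, ← one_div]
    exact mul_le_mul_of_nonneg_left hσ (by positivity)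
  have h2 : (1:ℝ) < (m.factorial : ℝ) / m.choose 2 := by
    rw [lt_div_iff₀ (by exact_mod_cast hchpos)]
    exact_mod_cast by simpa using hch
  linarith
end

section
/- Let k ≥ 0 be an integer and ℓ a real number with 0 ≤ ℓ < k+1, and set C = k(k+1)/2 + ℓ. Then Σ_{i=1}^{k} i²(i+1) + ℓ(k+1)(k+2) ≥ C(C+1). -/
lemma sum_aux (k : ℕ) : ∑ i ∈ Finset.Icc 1 k, ((i : ℝ) ^ 2 * ((i : ℝ) + 1)) =
    ((k : ℝ) * ((k : ℝ) + 1) / 2) ^ 2 + (k : ℝ) * ((k : ℝ) + 1) * (2 * (k : ℝ) + 1) / 6 := by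
  induction k with
  | zero => simp
  | succ n ih =>
    rw [Finset.sum_Icc_succ_top (by omega), ih]
    push_cast
    ring

theorem stmt_9 (k : ℕ) (ℓ : ℝ) (hℓ0 : 0 ≤ ℓ) (hℓ : ℓ < (k : ℝ) + 1) :
    ((k : ℝ) * ((k : ℝ) + 1) / 2 + ℓ) * ((k : ℝ) * ((k : ℝ) + 1) / 2 + ℓ + 1) ≤
      (∑ i ∈ Finset.Icc 1 k, ((i : ℝ) ^ 2 * ((i : ℝ) + 1)))
        + ℓ * ((k : ℝ) + 1) * ((k : ℝ) + 2) := by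
  have hsum := sum_aux k
  have hk : (0 : ℝ) ≤ (k : ℝ) * ((k : ℝ) - 1) := by
    rcases Nat.eq_zero_or_pos k with h | h
    · simp [h]
    · have h1 : (1 : ℝ) ≤ (k : ℝ) := by exact_mod_cast h
      nlinarith
  have h2 : (0 : ℝ) ≤ ℓ * ((k : ℝ) + 1 - ℓ) := mul_nonneg hℓ0 (by linarith)
  rw [hsum]
  nlinarith [mul_nonneg hk (by positivity : (0:ℝ) ≤ (k:ℝ) + 1), mul_nonneg hℓ0 hℓ0,
    mul_nonneg h2 (by positivity : (0:ℝ) ≤ (k:ℝ) + 1)]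
end

section
/- Let k ≥ 2 be an integer and ℓ a real number with 0 ≤ ℓ ≤ k+1, and set C = k(k+1)/2 + ℓ. Then Σ_{i=1}^{k} i²(i+1) + ℓ(k+1)(k+2) ≥ C(C+1) + 2. -/
lemma sum_formula (k : ℕ) :
    (∑ i ∈ Finset.Icc 1 k, ((i : ℝ) ^ 2 * ((i : ℝ) + 1))) =
      ((k : ℝ) * (k + 1) / 2) ^ 2 + (k : ℝ) * (k + 1) * (2 * k + 1) / 6 := by
  induction k with
  | zero => simp
  | succ n ih =>
    rw [Finset.sum_Icc_succ_top (by omega)] at *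
    push_cast
    push_cast at ih
    rw [ih]
    ring

theorem stmt_10 (k : ℕ) (hk : 2 ≤ k) (ℓ : ℝ) (hℓ0 : 0 ≤ ℓ) (hℓ : ℓ ≤ (k : ℝ) + 1) :
    ((k : ℝ) * ((k : ℝ) + 1) / 2 + ℓ) * ((k : ℝ) * ((k : ℝ) + 1) / 2 + ℓ + 1) + 2 ≤
      (∑ i ∈ Finset.Icc 1 k, ((i : ℝ) ^ 2 * ((i : ℝ) + 1)))
        + ℓ * ((k : ℝ) + 1) * ((k : ℝ) + 2) := by
  rw [sum_formula]
  have hk2 : (2 : ℝ) ≤ (k : ℝ) := by exact_mod_cast hk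
  nlinarith [mul_nonneg hℓ0 (sub_nonneg.2 hℓ), sq_nonneg ((k:ℝ) - 2), sq_nonneg ℓ,
    mul_nonneg hℓ0 (by linarith : (0:ℝ) ≤ (k:ℝ))]
end

section
/- If a ranking ⊳ is pair-priceable for a ranking profile R on m candidates, then ⊳ satisfies strong proportional justified representation: for every subprofile S of R, the number of pairs (x,y) with x ⊳ y that agree with at least one ranking ≻ having S(≻) > 0 is at least ⌊|S| · C(m,2)⌋. -/
open scoped Classical

/-- The pairs of the output ranking `⊳ = x₁,…,x_m` (the natural order on `Fin m`). -/
noncomputable def outPairs (m : ℕ) : Finset (Fin m × Fin m) :=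
  (Finset.univ : Finset (Fin m × Fin m)).filter (fun p => p.1 < p.2)

/-- Pair-priceability implies strong proportional justified representation:
for every subprofile `S` of `R`, the output ranking (the natural order on `Fin m`)
agrees on at least `⌊|S|·C(m,2)⌋` pairs with the union of the rankings that get
positive weight in `S`. Rankings are permutations `σ` with `x ≻ y` iff `σ x < σ y`. -/
theorem stmt_11 {m : ℕ} (R : Equiv.Perm (Fin m) → ℝ)
    (hR0 : ∀ σ, 0 ≤ R σ) (hR1 : ∀ σ, R σ ≤ 1) (hRsum : ∑ σ, R σ = 1)
    (π : Equiv.Perm (Fin m) → Fin m × Fin m → ℝ)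
    (h0 : ∀ σ p, 0 ≤ π σ p ∧ π σ p ≤ 1)
    (h1 : ∀ σ, ∀ p ∈ outPairs m, π σ p ≤ (if σ p.1 < σ p.2 then (1 : ℝ) else 0))
    (h2 : ∀ σ, ∑ p ∈ outPairs m, π σ p ≤ (m.choose 2 : ℝ) * R σ)
    (h3 : ∀ p ∈ outPairs m, ∑ σ, π σ p ≤ 1)
    (h4 : (m.choose 2 : ℝ) - 1 < ∑ σ, ∑ p ∈ outPairs m, π σ p) :
    ∀ S : Equiv.Perm (Fin m) → ℝ, (∀ σ, 0 ≤ S σ) → (∀ σ, S σ ≤ R σ) →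
      ⌊(∑ σ, S σ) * (m.choose 2 : ℝ)⌋ ≤
        (((outPairs m).filter (fun p => ∃ σ, 0 < S σ ∧ σ p.1 < σ p.2)).card : ℤ) := by
  intro S hS0 hSR
  set N : ℝ := (m.choose 2 : ℝ) with hN
  have hN0 : 0 ≤ N := by positivity
  set T := outPairs m with hT
  set B := T.filter (fun p => ∃ σ, 0 < S σ ∧ σ p.1 < σ p.2) with hB
  have hBsub : B ⊆ T := Finset.filter_subset _ _
  set A : Finset (Equiv.Perm (Fin m)) :=
    Finset.univ.filter (fun σ => ¬ 0 < S σ) with hA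
  have hSA : ∀ σ ∈ A, S σ = 0 := by
    intro σ hσ
    have : ¬ 0 < S σ := (Finset.mem_filter.mp hσ).2
    exact le_antisymm (not_lt.mp this) (hS0 σ)
  -- payments on pairs outside B come only from σ ∈ A
  have key : ∀ p ∈ T \ B, ∑ σ, π σ p = ∑ σ ∈ A, π σ p := by
    intro p hp
    obtain ⟨hpT, hpB⟩ := Finset.mem_sdiff.mp hp
    rw [← Finset.sum_filter_add_sum_filter_not Finset.univ (fun σ => ¬ 0 < S σ)]
    have hz : ∑ σ ∈ Finset.univ.filter (fun σ => ¬¬ 0 < S σ), π σ p = 0 := by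
      apply Finset.sum_eq_zero
      intro σ hσ
      have hpos : 0 < S σ := not_not.mp (Finset.mem_filter.mp hσ).2
      have hnot : ¬ σ p.1 < σ p.2 := fun hlt =>
        hpB (Finset.mem_filter.mpr ⟨hpT, σ, hpos, hlt⟩)
      have := h1 σ p hpT
      rw [if_neg hnot] at this
      exact le_antisymm this (h0 σ p).1
    rw [hz, add_zero]
  -- bound on payment to B
  have hBbd : ∑ p ∈ B, ∑ σ, π σ p ≤ (B.card : ℝ) := by
    calc ∑ p ∈ B, ∑ σ, π σ p ≤ ∑ p ∈ B, (1 : ℝ) :=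
          Finset.sum_le_sum (fun p hp => h3 p (hBsub hp))
      _ = (B.card : ℝ) := by simp
  -- bound on payment outside B
  have houtbd : ∑ p ∈ T \ B, ∑ σ, π σ p ≤ N * ∑ σ ∈ A, R σ := by
    calc ∑ p ∈ T \ B, ∑ σ, π σ p = ∑ p ∈ T \ B, ∑ σ ∈ A, π σ p :=
          Finset.sum_congr rfl key
      _ = ∑ σ ∈ A, ∑ p ∈ T \ B, π σ p := Finset.sum_comm
      _ ≤ ∑ σ ∈ A, ∑ p ∈ T, π σ p := by
          apply Finset.sum_le_sum
          intro σ _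
          exact Finset.sum_le_sum_of_subset_of_nonneg (Finset.sdiff_subset)
            (fun p _ _ => (h0 σ p).1)
      _ ≤ ∑ σ ∈ A, N * R σ := Finset.sum_le_sum (fun σ _ => h2 σ)
      _ = N * ∑ σ ∈ A, R σ := by rw [Finset.mul_sum]
  -- bound on weight of A
  have hAbd : ∑ σ ∈ A, R σ ≤ 1 - ∑ σ, S σ := by
    have hsplitR : ∑ σ ∈ A, R σ + ∑ σ ∈ Aᶜ, R σ = 1 := by
      rw [Finset.sum_add_sum_compl]; exact hRsum
    have hsplitS : ∑ σ, S σ = ∑ σ ∈ Aᶜ, S σ := by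
      rw [← Finset.sum_add_sum_compl A S, Finset.sum_eq_zero hSA, zero_add]
    have hSRc : ∑ σ ∈ Aᶜ, S σ ≤ ∑ σ ∈ Aᶜ, R σ :=
      Finset.sum_le_sum (fun σ _ => hSR σ)
    linarith
  -- combine
  have hsplit : ∑ p ∈ T \ B, ∑ σ, π σ p + ∑ p ∈ B, ∑ σ, π σ p
      = ∑ p ∈ T, ∑ σ, π σ p := Finset.sum_sdiff hBsub
  have h4' : N - 1 < ∑ p ∈ T, ∑ σ, π σ p := by
    rw [Finset.sum_comm]; exact h4
  have hmul : N * (1 - ∑ σ, S σ) ≥ N * ∑ σ ∈ A, R σ :=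
    mul_le_mul_of_nonneg_left hAbd hN0
  have hfinal : (∑ σ, S σ) * N < (B.card : ℝ) + 1 := by nlinarith
  have : ⌊(∑ σ, S σ) * N⌋ < (B.card : ℤ) + 1 := by
    apply Int.floor_lt.mpr
    push_cast
    exact hfinal
  omega
end

section
/- Pair-priceability implies Pareto-optimality: if ⊳ is pair-priceable for a profile R on m ≥ 2 candidates and there exist candidates x, y such that x ≻ y for every ranking ≻ with R(≻) > 0, then x ⊳ y. -/
/-!
The pair `(y, x)` would be an output pair, but no ranking pays for it: a ranking of positive
weight ranks `x` above `y`, and any other ranking has no budget. Since every other pair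
receives at most `1`, the total payment is at most `C(m, 2) - 1`, contradicting condition (4).
-/

open scoped Classical

open Finset

theorem card_outPairs (m : ℕ) : #(outPairs m) = m.choose 2 := by
  simpa [outPairs] using Fintype.card_product_filter_lt (α := Fin m)

theorem sum_le_card_sub_one {ι : Type*} {s : Finset ι} {f : ι → ℝ} (hf : ∀ i ∈ s, f i ≤ 1)
    {a : ι} (ha : a ∈ s) (hfa : f a = 0) : ∑ i ∈ s, f i ≤ #s - 1 := by
  rw [← add_sum_erase s f ha, hfa, zero_add, ← Nat.cast_pred (card_pos.mpr ⟨a, ha⟩),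
    ← card_erase_of_mem ha]
  exact sum_le_card_nsmul _ _ _ (fun i hi => hf i (mem_of_mem_erase hi)) |>.trans_eq (by simp)

theorem stmt_12_general {m : ℕ} (R : Equiv.Perm (Fin m) → ℝ)
    (hRsum : ∑ σ, R σ = 1)
    (π : Equiv.Perm (Fin m) → Fin m × Fin m → ℝ)
    (h0 : ∀ σ p, 0 ≤ π σ p ∧ π σ p ≤ 1)
    (h1 : ∀ σ, ∀ p ∈ outPairs m, π σ p ≤ (if σ p.1 < σ p.2 then (1 : ℝ) else 0))
    (h2 : ∀ σ, ∑ p ∈ outPairs m, π σ p ≤ (m.choose 2 : ℝ) * R σ)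
    (h3 : ∀ p ∈ outPairs m, ∑ σ, π σ p ≤ 1)
    (h4 : (m.choose 2 : ℝ) - 1 < ∑ σ, ∑ p ∈ outPairs m, π σ p)
    (x y : Fin m) (hxy : ∀ σ : Equiv.Perm (Fin m), 0 < R σ → σ x < σ y) :
    x < y := by
  obtain ⟨σ₀, -, hσ₀⟩ : ∃ σ ∈ univ, (0 : ℝ) < R σ := exists_lt_of_sum_lt (by simp [hRsum])
  by_contra! hyx
  have hmem : (y, x) ∈ outPairs m := by
    have hne : y ≠ x := fun h => (hxy σ₀ hσ₀).ne (by rw [h])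
    simpa [outPairs] using hyx.lt_of_ne hne
  have hunpaid : ∀ σ, π σ (y, x) = 0 := by
    intro σ
    refine le_antisymm ?_ (h0 σ _).1
    rcases lt_or_ge 0 (R σ) with hpos | hnonpos
    · simpa [(hxy σ hpos).not_gt] using h1 σ _ hmem
    · calc π σ (y, x) ≤ ∑ p ∈ outPairs m, π σ p := single_le_sum (fun p _ => (h0 σ p).1) hmem
        _ ≤ m.choose 2 * R σ := h2 σ
        _ ≤ 0 := mul_nonpos_of_nonneg_of_nonpos (by positivity) hnonpos
  have htotal : ∑ σ, ∑ p ∈ outPairs m, π σ p ≤ (m.choose 2 : ℝ) - 1 := by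
    rw [sum_comm, ← card_outPairs]
    exact sum_le_card_sub_one h3 hmem (by simp [hunpaid])
  linarith

/-- Pair-priceability implies Pareto-optimality: if the output ranking (the
natural order on `Fin m`) is pair-priceable for `R` and every ranking with
positive weight prefers `x` to `y`, then `x` is ahead of `y` in the output. -/
theorem stmt_12 {m : ℕ} (hm : 2 ≤ m) (R : Equiv.Perm (Fin m) → ℝ)
    (hR0 : ∀ σ, 0 ≤ R σ) (hR1 : ∀ σ, R σ ≤ 1) (hRsum : ∑ σ, R σ = 1)
    (π : Equiv.Perm (Fin m) → Fin m × Fin m → ℝ)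
    (h0 : ∀ σ p, 0 ≤ π σ p ∧ π σ p ≤ 1)
    (h1 : ∀ σ, ∀ p ∈ outPairs m, π σ p ≤ (if σ p.1 < σ p.2 then (1 : ℝ) else 0))
    (h2 : ∀ σ, ∑ p ∈ outPairs m, π σ p ≤ (m.choose 2 : ℝ) * R σ)
    (h3 : ∀ p ∈ outPairs m, ∑ σ, π σ p ≤ 1)
    (h4 : (m.choose 2 : ℝ) - 1 < ∑ σ, ∑ p ∈ outPairs m, π σ p)
    (x y : Fin m) (hxy : ∀ σ : Equiv.Perm (Fin m), 0 < R σ → σ x < σ y) :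
    x < y :=
  stmt_12_general R hRsum π h0 h1 h2 h3 h4 x y hxy
end

section
/- Let n ≥ 4 candidates remain with remaining budgets b(≻) ≥ 0 summing to n(n−1)/2, and let x* maximize the Borda score U(b, x, X) over X. Then for every ranking ≻, ((n−1) · u(≻, x*, X) · b(≻)) / U(b, x*, X) ≤ b(≻); that is, the proportional payment of each ranking never exceeds its budget. (Uses U(b, x*, X) ≥ (n−1)²·n/4 and u(≻, x*, X) ≤ n−1.) -/
/-- `u(≻, x, X) = |{y ∈ X \ {x} : x ≻ y}|`. -/
def uCand {C : Type*} [DecidableEq C] (r : C → C → Prop) [DecidableRel r]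
    (x : C) (X : Finset C) : ℕ :=
  ((X.erase x).filter (fun y => r x y)).card

/-- The Borda score `U(b, x, X) = Σ_≻ b(≻)·u(≻, x, X)` over the whole candidate set. -/
def borda {X : Type*} [Fintype X] [DecidableEq X] {ι : Type*} [Fintype ι]
    (r : ι → X → X → Prop) [∀ i, DecidableRel (r i)] (b : ι → ℝ) (x : X) : ℝ :=
  ∑ i, b i * (uCand (r i) x Finset.univ : ℝ)

lemma sum_uCand {X : Type*} [Fintype X] [DecidableEq X] (r : X → X → Prop) [DecidableRel r]
    (h : IsStrictTotalOrder X r) :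
    2 * ∑ x, uCand r x Finset.univ = Fintype.card X * (Fintype.card X - 1) := by
  haveI := h
  have hirr : ∀ x : X, ¬ r x x := fun x => irrefl_of r x
  have hasym : ∀ x y : X, r x y → r y x → False := fun x y h1 h2 =>
    hirr x (trans_of r h1 h2)
  have step1 : ∑ x, uCand r x Finset.univ
      = (Finset.univ.filter (fun p : X × X => r p.1 p.2)).card := by
    rw [Finset.card_filter]
    rw [Fintype.sum_prod_type]
    apply Finset.sum_congr rfl
    intro x _
    unfold uCand
    rw [Finset.filter_erase, Finset.erase_eq_self.2 (by simp [hirr]), Finset.card_filter]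
  have swapcard : (Finset.univ.filter (fun p : X × X => r p.1 p.2)).card
      = (Finset.univ.filter (fun p : X × X => r p.2 p.1)).card := by
    apply Finset.card_bij (fun p _ => Prod.swap p)
    · intro p hp; simp at hp ⊢; exact hp
    · intro p _ q _ hpq; exact Prod.swap_injective hpq
    · intro p hp; exact ⟨p.swap, by simpa using hp, by simp⟩
  have split : (Finset.univ.filter (fun p : X × X => r p.1 p.2)).card
      + (Finset.univ.filter (fun p : X × X => r p.2 p.1)).card
      = (Finset.univ.filter (fun p : X × X => p.1 ≠ p.2)).card := by
    rw [← Finset.card_union_of_disjoint]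
    · congr 1
      ext p
      simp only [Finset.mem_union, Finset.mem_filter, Finset.mem_univ, true_and]
      constructor
      · rintro (h1 | h1) heq <;> [exact hirr _ (heq ▸ h1); exact hirr _ (heq ▸ h1)]
      · intro hne
        rcases trichotomous_of r p.1 p.2 with h1 | h1 | h1
        · exact Or.inl h1
        · exact absurd h1 hne
        · exact Or.inr h1
    · rw [Finset.disjoint_filter]
      intro p _ h1 h2
      exact hasym _ _ h1 h2
  have diag : (Finset.univ.filter (fun p : X × X => p.1 ≠ p.2)).card
      = Fintype.card X * (Fintype.card X - 1) := by
    rw [Finset.card_filter, Fintype.sum_prod_type]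
    have : ∀ x : X, (∑ y : X, if x ≠ y then (1:ℕ) else 0) = Fintype.card X - 1 := by
      intro x
      rw [← Finset.card_filter]
      have : Finset.univ.filter (fun y => x ≠ y) = Finset.univ.erase x := by
        ext y; simp [ne_comm, eq_comm]
      rw [this, Finset.card_erase_of_mem (Finset.mem_univ x), Finset.card_univ]
    simp_rw [this, Finset.sum_const, Finset.card_univ, smul_eq_mul]
  omega

/-- With `n ≥ 4` candidates, total budget `n(n−1)/2`, and `x*` a Borda winner,
the proportional payment of each ranking never exceeds its budget. -/
theorem stmt_16 {X : Type*} [Fintype X] [DecidableEq X] {n : ℕ} (hn : 4 ≤ n)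
    (hcard : Fintype.card X = n)
    {ι : Type*} [Fintype ι] (r : ι → X → X → Prop) [∀ i, DecidableRel (r i)]
    (hr : ∀ i, IsStrictTotalOrder X (r i))
    (b : ι → ℝ) (hb : ∀ i, 0 ≤ b i)
    (hsum : ∑ i, b i = (n : ℝ) * ((n : ℝ) - 1) / 2)
    (xstar : X) (hmax : ∀ x : X, borda r b x ≤ borda r b xstar)
    (hpos : 0 < borda r b xstar) :
    ∀ i : ι, ((n : ℝ) - 1) * (uCand (r i) xstar Finset.univ : ℝ) * b i / borda r b xstar
      ≤ b i := by
  intro i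
  have hn1 : (1:ℝ) ≤ (n:ℝ) := by exact_mod_cast (show 1 ≤ n by omega)
  -- sum of uCand over all x, real version
  have hsumu : ∀ j, (∑ x, (uCand (r j) x Finset.univ : ℝ)) = (n:ℝ) * ((n:ℝ) - 1) / 2 := by
    intro j
    have := sum_uCand (r j) (hr j)
    rw [hcard] at this
    have h2 : (2:ℝ) * ∑ x, (uCand (r j) x Finset.univ : ℝ) = (n:ℝ) * ((n:ℝ) - 1) := by
      have hc := congrArg (Nat.cast : ℕ → ℝ) this
      push_cast [Nat.cast_sub (show 1 ≤ n by omega)] at hc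
      linarith
    linarith
  -- total borda
  have htot : ∑ x, borda r b x = ((n:ℝ) * ((n:ℝ) - 1) / 2) ^ 2 := by
    unfold borda
    rw [Finset.sum_comm]
    have : ∀ j, ∑ x, b j * (uCand (r j) x Finset.univ : ℝ)
        = b j * ((n:ℝ) * ((n:ℝ) - 1) / 2) := by
      intro j
      rw [← Finset.mul_sum, hsumu j]
    simp_rw [this, ← Finset.sum_mul, hsum]
    ring
  have hXcard : (Finset.univ : Finset X).card = n := by rw [Finset.card_univ, hcard]
  have hlow : ((n:ℝ) * ((n:ℝ) - 1) / 2) ^ 2 ≤ (n:ℝ) * borda r b xstar := by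
    calc ((n:ℝ) * ((n:ℝ) - 1) / 2) ^ 2 = ∑ x, borda r b x := htot.symm
      _ ≤ ∑ _x : X, borda r b xstar := Finset.sum_le_sum (fun x _ => hmax x)
      _ = (n:ℝ) * borda r b xstar := by rw [Finset.sum_const, hXcard]; simp
  have hnpos : (0:ℝ) < (n:ℝ) := by positivity
  have hU : ((n:ℝ) - 1) ^ 2 ≤ borda r b xstar := by
    have h4 : (4:ℝ) ≤ (n:ℝ) := by exact_mod_cast hn
    nlinarith [sq_nonneg ((n:ℝ) - 1)]
  have hu : (uCand (r i) xstar Finset.univ : ℝ) ≤ (n:ℝ) - 1 := by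
    have : uCand (r i) xstar Finset.univ ≤ n - 1 := by
      unfold uCand
      calc ((Finset.univ.erase xstar).filter _).card
          ≤ (Finset.univ.erase xstar).card := Finset.card_filter_le _ _
        _ = n - 1 := by rw [Finset.card_erase_of_mem (Finset.mem_univ xstar), hXcard]
    calc (uCand (r i) xstar Finset.univ : ℝ) ≤ ((n - 1 : ℕ) : ℝ) := by exact_mod_cast this
      _ = (n:ℝ) - 1 := by push_cast [Nat.cast_sub (by omega : 1 ≤ n)]; ring
  rw [div_le_iff₀ hpos]
  have key : ((n:ℝ) - 1) * (uCand (r i) xstar Finset.univ : ℝ) ≤ borda r b xstar := by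
    calc ((n:ℝ) - 1) * (uCand (r i) xstar Finset.univ : ℝ) ≤ ((n:ℝ)-1) * ((n:ℝ)-1) :=
          mul_le_mul_of_nonneg_left hu (by linarith)
      _ = ((n:ℝ) - 1)^2 := by ring
      _ ≤ borda r b xstar := hU
  calc ((n : ℝ) - 1) * (uCand (r i) xstar Finset.univ : ℝ) * b i
      ≤ borda r b xstar * b i := mul_le_mul_of_nonneg_right key (hb i)
    _ = b i * borda r b xstar := by ring
end

section
/- Let n ≥ 1 candidates remain, with each ranking ≻ having a nonnegative budget b(≻), and suppose the total budget is Σ_≻ b(≻) = n(n−1)/2 (with candidate set X of size n). Then Σ_{x ∈ X} Σ_≻ min(b(≻), u(≻, x, X)) ≥ 2·Σ_≻ b(≻) whenever b(≻) < n−2 for all ≻ (n ≥ 3); consequently there exists a candidate x with Σ_≻ min(b(≻), u(≻, x, X)) ≥ n−1. -/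
section

variable {C : Type*} [DecidableEq C] (r : C → C → Prop) [DecidableRel r]

theorem uCand_lt_uCand [IsStrictOrder C r] {S : Finset C} {x y : C} (hy : y ∈ S) (hxy : r x y) :
    uCand r y S < uCand r x S := by
  have hxy' : x ≠ y := fun h => irrefl_of r x (h ▸ hxy)
  refine Finset.card_lt_card ⟨fun z hz => ?_, fun hsub => ?_⟩
  · simp only [Finset.mem_filter, Finset.mem_erase] at hz ⊢
    obtain ⟨⟨-, hzS⟩, hyz⟩ := hz
    refine ⟨⟨?_, hzS⟩, trans_of r hxy hyz⟩
    rintro rfl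
    exact irrefl_of r z (trans_of r hxy hyz)
  · have hy' : y ∈ (S.erase x).filter (r x) := by
      simp [Finset.mem_filter, Finset.mem_erase, hxy'.symm, hy, hxy]
    simpa [Finset.mem_filter, Finset.mem_erase] using hsub hy'

theorem uCand_injective [Fintype C] [IsStrictTotalOrder C r] :
    Function.Injective (fun x => uCand r x Finset.univ) := by
  intro x y hxy
  rcases trichotomous_of r x y with h | h | h
  · exact absurd hxy (uCand_lt_uCand r (Finset.mem_univ y) h).ne'
  · exact h
  · exact absurd hxy (uCand_lt_uCand r (Finset.mem_univ x) h).ne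

end

theorem card_filter_lt_le_of_injective {α : Type*} [Fintype α] {f : α → ℕ}
    (hf : Function.Injective f) (k : ℕ) : (Finset.univ.filter fun x => f x < k).card ≤ k := by
  simpa using Finset.card_le_card_of_injOn f (t := Finset.range k)
    (fun x hx => by simpa using hx) hf.injOn

theorem mul_le_sum_min_of_injective {α : Type*} [Fintype α] {f : α → ℕ}
    (hf : Function.Injective f) {β : ℝ} (hβ : 0 ≤ β) {k : ℕ} (hβk : β ≤ k) :
    ((Fintype.card α - k : ℕ) : ℝ) * β ≤ ∑ x, min β (f x : ℝ) := by
  set S := Finset.univ.filter fun x => k ≤ f x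
  have hS : Fintype.card α - k ≤ S.card := by
    have hsplit : S.card + (Finset.univ.filter fun x => ¬ k ≤ f x).card = Fintype.card α :=
      Finset.card_filter_add_card_filter_not _
    have hlow : (Finset.univ.filter fun x => ¬ k ≤ f x).card ≤ k := by
      simpa only [not_le] using card_filter_lt_le_of_injective hf k
    omega
  have hmin : ∀ x ∈ S, min β (f x : ℝ) = β := fun x hx =>
    min_eq_left (hβk.trans (by exact_mod_cast (Finset.mem_filter.mp hx).2))
  calc ((Fintype.card α - k : ℕ) : ℝ) * β ≤ S.card * β := by gcongr
    _ = ∑ x ∈ S, min β (f x : ℝ) := by rw [Finset.sum_congr rfl hmin]; simp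
    _ ≤ ∑ x, min β (f x : ℝ) :=
      Finset.sum_le_sum_of_subset_of_nonneg (Finset.subset_univ S)
        fun x _ _ => le_min hβ (Nat.cast_nonneg _)

/-- If all budgets are below `n−2` and sum to `n(n−1)/2`, then the total capped
Borda score is at least twice the total budget, and hence some candidate has
capped score at least `n−1`. -/
theorem stmt_17 {X : Type*} [Fintype X] [DecidableEq X] {n : ℕ} (hn : 3 ≤ n)
    (hcard : Fintype.card X = n)
    {ι : Type*} [Fintype ι] (r : ι → X → X → Prop) [∀ i, DecidableRel (r i)]
    (hr : ∀ i, IsStrictTotalOrder X (r i))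
    (b : ι → ℝ) (hb : ∀ i, 0 ≤ b i)
    (hsum : ∑ i, b i = (n : ℝ) * ((n : ℝ) - 1) / 2)
    (hlt : ∀ i, b i < (n : ℝ) - 2) :
    2 * (∑ i, b i) ≤ ∑ x : X, ∑ i, min (b i) (uCand (r i) x Finset.univ : ℝ) ∧
    ∃ x : X, (n : ℝ) - 1 ≤ ∑ i, min (b i) (uCand (r i) x Finset.univ : ℝ) := by
  have hcast : ((n - 2 : ℕ) : ℝ) = n - 2 := by push_cast [show 2 ≤ n by omega]; ring
  have hranking : ∀ i, 2 * b i ≤ ∑ x : X, min (b i) (uCand (r i) x Finset.univ : ℝ) := by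
    intro i
    have := hr i
    have := mul_le_sum_min_of_injective (uCand_injective (r i)) (hb i)
      (k := n - 2) (hcast ▸ (hlt i).le)
    rwa [hcard, show n - (n - 2) = 2 by omega, Nat.cast_ofNat] at this
  have htotal : 2 * (∑ i, b i) ≤ ∑ x : X, ∑ i, min (b i) (uCand (r i) x Finset.univ : ℝ) := by
    rw [Finset.sum_comm, Finset.mul_sum]
    exact Finset.sum_le_sum fun i _ => hranking i
  refine ⟨htotal, (Finset.exists_le_of_sum_le (s := Finset.univ) ?_ ?_).imp fun _ => And.right⟩
  · rw [Finset.univ_nonempty_iff, ← Fintype.card_pos_iff]; omega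
  · rw [Finset.sum_const, Finset.card_univ, hcard, nsmul_eq_mul]
    linarith
end

section
/- Let m ≥ 2 and let C ≥ 0 be a real number. If the payments C_i ∈ [0, m−i] for i = 1,…,m−1 satisfy Σ_i C_i = C, then the weighted sum Σ_{i=1}^{m-1} C_i·(m−i)(m−i+1)/4 is at least C(C+1)/4. (The minimum is attained by loading payments onto the latest rounds.) -/
lemma gauss_real (n : ℕ) : ∑ j ∈ Finset.Icc 1 n, (j : ℝ) = n * (n + 1) / 2 := by
  induction n with
  | zero => simp
  | succ n ih =>
    rw [Finset.sum_Icc_succ_top (by omega), ih]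
    push_cast
    ring

lemma key (n : ℕ) : ∀ d : ℕ → ℝ,
    (∀ j ∈ Finset.Icc 1 n, 0 ≤ d j ∧ d j ≤ j) →
    (∑ j ∈ Finset.Icc 1 n, d j) * ((∑ j ∈ Finset.Icc 1 n, d j) + 1) ≤
      ∑ j ∈ Finset.Icc 1 n, d j * (j * (j + 1)) := by
  induction n with
  | zero => intro d _; simp
  | succ n ih =>
    intro d hd
    rw [Finset.sum_Icc_succ_top (by omega), Finset.sum_Icc_succ_top (by omega)]
    have hsub : ∀ j ∈ Finset.Icc 1 n, 0 ≤ d j ∧ d j ≤ j := by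
      intro j hj
      exact hd j (Finset.mem_Icc.mpr ⟨(Finset.mem_Icc.mp hj).1, (Finset.mem_Icc.mp hj).2.trans (by omega)⟩)
    have h1 := ih d hsub
    set S' := ∑ j ∈ Finset.Icc 1 n, d j with hS'
    have hS'le : S' ≤ n * (n + 1) / 2 := by
      calc S' ≤ ∑ j ∈ Finset.Icc 1 n, (j : ℝ) :=
            Finset.sum_le_sum (fun j hj => (hsub j hj).2)
        _ = n * (n + 1) / 2 := gauss_real n
    have hdn := hd (n + 1) (Finset.mem_Icc.mpr ⟨by omega, le_refl _⟩)
    have hdn1 : 0 ≤ d (n + 1) := hdn.1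
    have hdn2 : d (n + 1) ≤ (n : ℝ) + 1 := by
      have := hdn.2; push_cast at this ⊢; linarith
    push_cast
    nlinarith [hdn.1, mul_nonneg hdn1 hdn1]

/-- If payments `C_i ∈ [0, m−i]` for `i = 1,…,m−1` sum to `C`, then the weighted
sum `Σ C_i·(m−i)(m−i+1)/4` is at least `C(C+1)/4`. -/
theorem stmt_18 {m : ℕ} (hm : 2 ≤ m) (Cval : ℝ) (hC : 0 ≤ Cval)
    (c : ℕ → ℝ)
    (hc : ∀ i ∈ Finset.Icc 1 (m - 1), 0 ≤ c i ∧ c i ≤ (m : ℝ) - i)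
    (hsum : ∑ i ∈ Finset.Icc 1 (m - 1), c i = Cval) :
    Cval * (Cval + 1) / 4 ≤
      ∑ i ∈ Finset.Icc 1 (m - 1),
        c i * (((m : ℝ) - i) * ((m : ℝ) - i + 1) / 4) := by
  set d : ℕ → ℝ := fun j => c (m - j) with hd
  have hbij : ∀ (f : ℕ → ℝ), ∑ i ∈ Finset.Icc 1 (m - 1), f i
      = ∑ j ∈ Finset.Icc 1 (m - 1), f (m - j) := by
    intro f
    apply Finset.sum_nbij' (fun i => m - i) (fun j => m - j)
    · intro a ha; simp only [Finset.mem_Icc] at ha ⊢; omega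
    · intro a ha; simp only [Finset.mem_Icc] at ha ⊢; omega
    · intro a ha; simp only [Finset.mem_Icc] at ha; omega
    · intro a ha; simp only [Finset.mem_Icc] at ha; omega
    · intro a ha; simp only [Finset.mem_Icc] at ha; congr 1; omega
  have hdbound : ∀ j ∈ Finset.Icc 1 (m - 1), 0 ≤ d j ∧ d j ≤ j := by
    intro j hj
    simp only [Finset.mem_Icc] at hj
    have hmem : m - j ∈ Finset.Icc 1 (m - 1) := Finset.mem_Icc.mpr ⟨by omega, by omega⟩
    have := hc (m - j) hmem
    refine ⟨this.1, ?_⟩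
    have hcast : (m : ℝ) - ((m - j : ℕ) : ℝ) = j := by
      have : ((m - j : ℕ) : ℝ) = (m : ℝ) - j := by
        push_cast [Nat.cast_sub (by omega : j ≤ m)]; ring
      rw [this]; ring
    calc d j ≤ (m : ℝ) - ((m - j : ℕ) : ℝ) := this.2
      _ = j := hcast
  have hdsum : ∑ j ∈ Finset.Icc 1 (m - 1), d j = Cval := by
    rw [← hsum]; exact (hbij c).symm
  have hk := key (m - 1) d hdbound
  rw [hdsum] at hk
  have hrw : ∑ i ∈ Finset.Icc 1 (m - 1),
        c i * (((m : ℝ) - i) * ((m : ℝ) - i + 1) / 4)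
      = (∑ j ∈ Finset.Icc 1 (m - 1), d j * (j * (j + 1))) / 4 := by
    rw [hbij (fun i => c i * (((m : ℝ) - i) * ((m : ℝ) - i + 1) / 4)),
      Finset.sum_div]
    apply Finset.sum_congr rfl
    intro j hj
    simp only [Finset.mem_Icc] at hj
    have hcast : (m : ℝ) - ((m - j : ℕ) : ℝ) = j := by
      have : ((m - j : ℕ) : ℝ) = (m : ℝ) - j := by
        push_cast [Nat.cast_sub (by omega : j ≤ m)]; ring
      rw [this]; ring
    simp only [hd, hcast]
    ring
  rw [hrw]
  linarith
end
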